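/- (Kantorovich inequality) Let Z be positive definite with largest eigenvalue a and smallest eigenvalue b, and let h be a unit vector. Then ⟨h, Zh⟩ · ⟨h, Z⁻¹h⟩ ≤ (a+b)²/(4ab). -/

import Mathlib

open scoped ComplexOrder

/-!
Diagonalize `Z` in an orthonormal eigenbasis `vᵢ`: both quadratic forms become averages
`∑ wᵢ λᵢ` and `∑ wᵢ λᵢ⁻¹` against the weights `wᵢ = |⟨vᵢ, h⟩|²`, which sum to `1`.
On `[b, a]` the function `t ↦ t⁻¹` lies below its chord `t ↦ (a + b - t) / (a b)`, so the
second average is at most `(a + b - T) / (a b)`, where `T` is the first one, and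
`T (a + b - T) ≤ (a + b)² / 4`.
-/

open scoped InnerProductSpace Matrix

lemma inv_le_add_sub_div_mul_of_mem_Icc {a b x : ℝ} (hb : 0 < b) (hx : x ∈ Set.Icc b a) :
    x⁻¹ ≤ (a + b - x) / (a * b) := by
  obtain ⟨hbx, hxa⟩ := hx
  have hx0 : 0 < x := hb.trans_le hbx
  rw [inv_eq_one_div, div_le_div_iff₀ hx0 (by nlinarith)]
  nlinarith [mul_nonneg (sub_nonneg.2 hbx) (sub_nonneg.2 hxa)]

theorem Finset.sum_mul_sum_inv_le_kantorovich {ι : Type*} (s : Finset ι) {w μ : ι → ℝ}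
    {a b : ℝ} (hb : 0 < b) (hw : ∀ i ∈ s, 0 ≤ w i) (hw1 : ∑ i ∈ s, w i = 1)
    (hμ : ∀ i ∈ s, μ i ∈ Set.Icc b a) :
    (∑ i ∈ s, w i * μ i) * ∑ i ∈ s, w i * (μ i)⁻¹ ≤ (a + b) ^ 2 / (4 * a * b) := by
  have hab : 0 < a * b := by
    obtain ⟨i, hi⟩ : s.Nonempty := nonempty_of_sum_ne_zero (hw1 ▸ one_ne_zero)
    nlinarith [(hμ i hi).1, (hμ i hi).2]
  set T := ∑ i ∈ s, w i * μ i
  have hT : 0 ≤ T := sum_nonneg fun i hi => mul_nonneg (hw i hi) (hb.le.trans (hμ i hi).1)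
  have hS : ∑ i ∈ s, w i * (μ i)⁻¹ ≤ (a + b - T) / (a * b) := calc
    _ ≤ ∑ i ∈ s, w i * ((a + b - μ i) / (a * b)) :=
      sum_le_sum fun i hi =>
        mul_le_mul_of_nonneg_left (inv_le_add_sub_div_mul_of_mem_Icc hb (hμ i hi)) (hw i hi)
    _ = (a + b - T) / (a * b) := by
      simp only [mul_div_assoc', ← sum_div, mul_sub, sum_sub_distrib, ← sum_mul, hw1, one_mul]
      rfl
  calc T * ∑ i ∈ s, w i * (μ i)⁻¹ ≤ T * ((a + b - T) / (a * b)) :=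
        mul_le_mul_of_nonneg_left hS hT
    _ ≤ (a + b) ^ 2 / (4 * a * b) := by
      rw [mul_div_assoc', div_le_div_iff₀ hab (by nlinarith)]
      nlinarith [sq_nonneg (a + b - 2 * T)]

lemma OrthonormalBasis.re_inner_map_self_eq_sum {𝕜 E ι F : Type*} [RCLike 𝕜]
    [NormedAddCommGroup E] [InnerProductSpace 𝕜 E] [Fintype ι] [FunLike F E E]
    [LinearMapClass F 𝕜 E E] (v : OrthonormalBasis ι 𝕜 E) {T : F} {μ : ι → ℝ}
    (hT : ∀ i, T (v i) = (μ i : 𝕜) • v i) (x : E) :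
    RCLike.re ⟪x, T x⟫_𝕜 = ∑ i, ‖⟪v i, x⟫_𝕜‖ ^ 2 * μ i := by
  have hTx : T x = ∑ i, (⟪v i, x⟫_𝕜 * μ i) • v i := by
    conv_lhs => rw [← v.sum_repr' x]
    simp only [map_sum, map_smul, hT, smul_smul]
  rw [hTx, inner_sum, map_sum]
  refine Finset.sum_congr rfl fun i _ => ?_
  rw [inner_smul_right, ← inner_conj_symm, mul_right_comm, RCLike.conj_mul, RCLike.norm_conj]
  norm_cast

lemma Matrix.inv_mulVec_eq_inv_smul {n K : Type*} [Fintype n] [DecidableEq n] [Field K]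
    {A : Matrix n n K} (hA : IsUnit A) {x : n → K} {c : K} (h : A *ᵥ x = c • x) :
    A⁻¹ *ᵥ x = c⁻¹ • x := by
  have hx : x = c • A⁻¹ *ᵥ x := by
    rw [← mulVec_smul, ← h, mulVec_mulVec, nonsing_inv_mul _ ((isUnit_iff_isUnit_det A).mp hA),
      one_mulVec]
  rcases eq_or_ne c 0 with rfl | hc
  · rw [hx]; simp
  · rw [← inv_smul_eq_iff₀ hc] at hx
    exact hx.symm

namespace Matrix.IsHermitian

variable {𝕜 n : Type*} [RCLike 𝕜] [Fintype n] [DecidableEq n] {A : Matrix n n 𝕜}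

lemma toEuclideanCLM_eigenvectorBasis (hA : A.IsHermitian) (i : n) :
    toEuclideanCLM (𝕜 := 𝕜) A (hA.eigenvectorBasis i) =
      (hA.eigenvalues i : 𝕜) • hA.eigenvectorBasis i := by
  apply WithLp.ofLp_injective 2
  rw [ofLp_toEuclideanCLM, hA.mulVec_eigenvectorBasis, WithLp.ofLp_smul,
    RCLike.real_smul_eq_coe_smul (K := 𝕜)]

lemma toEuclideanCLM_inv_eigenvectorBasis (hA : A.IsHermitian) (hA' : IsUnit A) (i : n) :
    toEuclideanCLM (𝕜 := 𝕜) A⁻¹ (hA.eigenvectorBasis i) =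
      (((hA.eigenvalues i)⁻¹ : ℝ) : 𝕜) • hA.eigenvectorBasis i := by
  apply WithLp.ofLp_injective 2
  rw [ofLp_toEuclideanCLM, WithLp.ofLp_smul, RCLike.ofReal_inv]
  refine inv_mulVec_eq_inv_smul hA' ?_
  rw [hA.mulVec_eigenvectorBasis, RCLike.real_smul_eq_coe_smul (K := 𝕜)]

end Matrix.IsHermitian

theorem stmt_9_general (n : ℕ) (Z : Matrix (Fin n) (Fin n) ℂ) (hZ : Z.PosDef) (a b : ℝ)
    (ha : ∀ i, hZ.1.eigenvalues i ≤ a)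
    (hb : ∀ i, b ≤ hZ.1.eigenvalues i) (hb' : ∃ i, hZ.1.eigenvalues i = b)
    (h : EuclideanSpace ℂ (Fin n)) (hh : ‖h‖ = 1) :
    (inner ℂ h (Matrix.toEuclideanCLM (𝕜 := ℂ) Z h) : ℂ).re *
        (inner ℂ h (Matrix.toEuclideanCLM (𝕜 := ℂ) Z⁻¹ h) : ℂ).re ≤
      (a + b) ^ 2 / (4 * a * b) := by
  set v := hZ.1.eigenvectorBasis
  have hw1 : ∑ i, ‖⟪v i, h⟫_ℂ‖ ^ 2 = 1 := by rw [v.sum_sq_norm_inner_right, hh, one_pow]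
  rw [← RCLike.re_to_complex, ← RCLike.re_to_complex,
    v.re_inner_map_self_eq_sum hZ.1.toEuclideanCLM_eigenvectorBasis,
    v.re_inner_map_self_eq_sum (hZ.1.toEuclideanCLM_inv_eigenvectorBasis hZ.isUnit)]
  obtain ⟨i, rfl⟩ := hb'
  exact Finset.univ.sum_mul_sum_inv_le_kantorovich (hZ.eigenvalues_pos i)
    (fun _ _ => sq_nonneg _) hw1 fun j _ => ⟨hb j, ha j⟩

theorem stmt_9 (n : ℕ) (Z : Matrix (Fin n) (Fin n) ℂ) (hZ : Z.PosDef) (a b : ℝ)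
    (ha : ∀ i, hZ.1.eigenvalues i ≤ a) (ha' : ∃ i, hZ.1.eigenvalues i = a)
    (hb : ∀ i, b ≤ hZ.1.eigenvalues i) (hb' : ∃ i, hZ.1.eigenvalues i = b)
    (h : EuclideanSpace ℂ (Fin n)) (hh : ‖h‖ = 1) :
    (inner ℂ h (Matrix.toEuclideanCLM (𝕜 := ℂ) Z h) : ℂ).re *
        (inner ℂ h (Matrix.toEuclideanCLM (𝕜 := ℂ) Z⁻¹ h) : ℂ).re ≤
      (a + b) ^ 2 / (4 * a * b) :=
  stmt_9_general n Z hZ a b ha hb hb' h hh
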